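/- arXiv:1809.09391 — 6 statements merged into one kernel-verified Lean document; each statement's English description precedes it below -/
import Mathlib

section
/- Let g^ε = (g^ε_0, g^ε_1) : U → ℂ² be a family of nonconstant holomorphic maps on a connected open neighbourhood U of 0 ∈ ℂ, depending continuously on a real parameter ε near 0, with (g^0)'(0) = (0,0). If the maps h^ε = [-(g^ε_1)' : (g^ε_0)'] : U → ℂℙ¹ depend continuously on ε (as maps to ℂℙ¹), then for every ε sufficiently close to 0 there exists z_ε ∈ U close to 0 with (g^ε)'(z_ε) = (0,0). -/
open Filter Topology
open scoped LinearAlgebra.Projectivization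

/-- The quotient topology on a projectivization. -/
noncomputable instance projTop (K V : Type*) [DivisionRing K] [AddCommGroup V] [Module K V]
    [TopologicalSpace V] : TopologicalSpace (ℙ K V) :=
  inferInstanceAs (TopologicalSpace (Quotient (projectivizationSetoid K V)))

/-! Near `(0, 0)` the continuous map `H` stays in one affine chart of `ℂℙ¹`, say the one
where the coordinate `(g₀^ε)'` is nonzero; there, wherever `(g₀^ε)'` vanishes so does
`(g₁^ε)'`, so it suffices to find zeros of `(g₀^ε)'` near `0`. The zero of `(g₀⁰)'` at `0` is
isolated, since otherwise both derivatives of `g⁰` vanish near `0` and `g⁰` is constant. Since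
`(g₀^ε)' → (g₀⁰)'` locally uniformly, Hurwitz's theorem produces the zeros. -/

namespace Projectivization

variable {K ι : Type*} [DivisionRing K]

lemma mk_rep_apply_ne_zero_iff (v : ι → K) (hv : v ≠ 0) (i : ι) :
    (mk K v hv).rep i ≠ 0 ↔ v i ≠ 0 := by
  obtain ⟨a, ha⟩ := exists_smul_eq_mk_rep K v hv
  simp [← ha, Units.smul_def]

variable [TopologicalSpace K] [T1Space K]

lemma isOpen_setOf_rep_apply_ne_zero (i : ι) :
    IsOpen {P : ℙ K (ι → K) | P.rep i ≠ 0} := by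
  let S := projectivizationSetoid K (ι → K)
  have hopen : IsOpen {v : {v : ι → K // v ≠ 0} | v.1 i ≠ 0} :=
    isOpen_compl_singleton.preimage ((continuous_apply i).comp continuous_subtype_val)
  have hpre : @Quotient.mk' _ S ⁻¹' {P : ℙ K (ι → K) | P.rep i ≠ 0} = {v | v.1 i ≠ 0} :=
    Set.ext fun v => mk_rep_apply_ne_zero_iff v.1 v.2 i
  exact (@isQuotientMap_quotient_mk' _ _ S).isOpen_preimage.1 (hpre ▸ hopen)

lemma exists_eventually_apply_eq_zero_imp {X : Type*} [TopologicalSpace X]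
    {H : X → ℙ K (ι → K)} {w : X → ι → K} {x₀ : X} (hH : ContinuousAt H x₀)
    (hHw : ∀ᶠ x in 𝓝 x₀, ∀ hw : w x ≠ 0, H x = mk K (w x) hw) :
    ∃ i, ∀ᶠ x in 𝓝 x₀, w x i = 0 → w x = 0 := by
  obtain ⟨i, hi⟩ : ∃ i, (H x₀).rep i ≠ 0 := Function.ne_iff.1 (H x₀).rep_nonzero
  refine ⟨i, ?_⟩
  filter_upwards [hH.eventually ((isOpen_setOf_rep_apply_ne_zero i).mem_nhds hi), hHw]
    with x hx hxw hwi
  by_contra hw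
  exact (mk_rep_apply_ne_zero_iff (w x) hw i).1 (hxw hw ▸ hx) hwi

end Projectivization

lemma ContinuousOn.tendstoLocallyUniformlyOn_of_prod {α β γ : Type*} [TopologicalSpace α]
    [TopologicalSpace β] [LocallyCompactSpace β] [UniformSpace γ] {f : α → β → γ}
    {s : Set α} {U : Set β} {a : α} (hs : s ∈ 𝓝 a) (hU : IsOpen U)
    (hf : ContinuousOn (Function.uncurry f) (s ×ˢ U)) :
    TendstoLocallyUniformlyOn f (f a) (𝓝 a) U := by
  refine (tendstoLocallyUniformlyOn_iff_forall_isCompact hU).2 fun K hKU hK u hu => ?_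
  obtain ⟨v, hv, hvK⟩ := hK.mem_uniformity_of_prod (hf.mono (Set.prod_mono le_rfl hKU))
    (mem_of_mem_nhds hs) (symm_le_uniformity hu)
  rw [nhdsWithin_eq_nhds.2 hs] at hv
  filter_upwards [hv] with p hp x hx using hvK p hp x hx

lemma exists_forall_eq_of_deriv_eventuallyEq_zero {U : Set ℂ} {f : ℂ → ℂ} {c : ℂ}
    (hU : IsOpen U) (hUc : IsPreconnected U) (hf : DifferentiableOn ℂ f U) (hc : c ∈ U)
    (h : deriv f =ᶠ[𝓝 c] 0) : ∃ a, ∀ z ∈ U, f z = a :=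
  hU.exists_is_const_of_deriv_eq_zero hUc hf <|
    ((hf.analyticOnNhd hU).deriv).eqOn_zero_of_preconnected_of_eventuallyEq_zero hUc hc h

open Metric in
lemma DiffContOnCl.exists_mem_closedBall_eq_zero {f : ℂ → ℂ} {c : ℂ} {r m : ℝ}
    (hf : DiffContOnCl ℂ f (ball c r)) (hr : 0 < r) (hc : ‖f c‖ < m)
    (hm : ∀ z ∈ sphere c r, m ≤ ‖f z‖) : ∃ z ∈ closedBall c r, f z = 0 := by
  by_contra! hne
  -- otherwise `1 / f` would violate the maximum modulus principle
  have hinv : DiffContOnCl ℂ (fun z => (f z)⁻¹) (ball c r) :=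
    hf.inv fun z hz => hne z (closure_ball c hr.ne' ▸ hz)
  have hm0 : 0 < m := (norm_nonneg _).trans_lt hc
  have hbound : ∀ z ∈ frontier (ball c r), ‖(f z)⁻¹‖ ≤ m⁻¹ := by
    rw [frontier_ball c hr.ne']
    intro z hz
    rw [norm_inv]
    exact inv_anti₀ hm0 (hm z hz)
  have := Complex.norm_le_of_forall_mem_frontier_norm_le isBounded_ball hinv hbound
    (subset_closure (mem_ball_self hr))
  rw [norm_inv, inv_le_inv₀ (norm_pos_iff.2 (hne c (mem_closedBall_self hr.le))) hm0] at this
  exact this.not_gt hc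

open Metric in
lemma TendstoLocallyUniformlyOn.eventually_exists_mem_ball_eq_zero {ι : Type*}
    {l : Filter ι} {F : ι → ℂ → ℂ} {f : ℂ → ℂ} {U : Set ℂ} {c : ℂ}
    (hFf : TendstoLocallyUniformlyOn F f l U) (hU : IsOpen U)
    (hF : ∀ᶠ n in l, DifferentiableOn ℂ (F n) U) (hf : ContinuousOn f U) (hc : c ∈ U)
    (hfc : f c = 0) (hiso : ∀ᶠ z in 𝓝[≠] c, f z ≠ 0) {δ : ℝ} (hδ : 0 < δ) :
    ∀ᶠ n in l, ∃ z ∈ ball c δ, F n z = 0 := by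
  obtain ⟨ρ, hρ, hρsub⟩ := nhds_basis_closedBall.mem_iff.1
    (inter_mem (eventually_nhdsWithin_iff.1 hiso) (hU.mem_nhds hc))
  set r := min ρ (δ / 2)
  have hr : 0 < r := lt_min hρ (half_pos hδ)
  have hrρ : closedBall c r ⊆ closedBall c ρ := closedBall_subset_closedBall (min_le_left _ _)
  have hrU : closedBall c r ⊆ U := fun z hz => (hρsub (hrρ hz)).2
  have hsphere : ∀ z ∈ sphere c r, f z ≠ 0 := fun z hz =>
    (hρsub (hrρ (sphere_subset_closedBall hz))).1 (ne_of_mem_sphere hz hr.ne')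
  obtain ⟨x, hx, hmin⟩ := (isCompact_sphere c r).exists_isMinOn
    (NormedSpace.sphere_nonempty.2 hr.le)
    (continuous_norm.comp_continuousOn (hf.mono (sphere_subset_closedBall.trans hrU)))
  have hm : 0 < ‖f x‖ := norm_pos_iff.2 (hsphere x hx)
  have hunif := (tendstoLocallyUniformlyOn_iff_forall_isCompact hU).1 hFf _ hrU
    (isCompact_closedBall c r)
  filter_upwards [Metric.tendstoUniformlyOn_iff.1 hunif _ (half_pos hm), hF] with n hn hFn
  have hcenter : ‖F n c‖ < ‖f x‖ / 2 := by
    simpa [hfc] using hn c (mem_closedBall_self hr.le)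
  have hbound : ∀ z ∈ sphere c r, ‖f x‖ / 2 ≤ ‖F n z‖ := fun z hz => by
    have hfz : ‖f x‖ ≤ ‖f z‖ := hmin hz
    have hclose := hn z (sphere_subset_closedBall hz)
    rw [dist_eq_norm] at hclose
    linarith [norm_sub_norm_le (f z) (F n z)]
  obtain ⟨z, hz, hFz⟩ :=
    (hFn.diffContOnCl_ball hrU).exists_mem_closedBall_eq_zero hr hcenter hbound
  exact ⟨z, closedBall_subset_ball ((min_le_right _ _).trans_lt (half_lt_self hδ)) hz, hFz⟩

open Metric in
lemma eventually_exists_common_critical_point {P : Type*} [TopologicalSpace P]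
    {a b : P → ℂ → ℂ} {p₀ : P} {U : Set ℂ} {c : ℂ} (hU : IsOpen U) (hUc : IsPreconnected U)
    (hc : c ∈ U) (ha : ∀ p, DifferentiableOn ℂ (a p) U) (hb : DifferentiableOn ℂ (b p₀) U)
    (hab : ¬ ∃ v : ℂ × ℂ, ∀ z ∈ U, (a p₀ z, b p₀ z) = v)
    (ha_lim : TendstoLocallyUniformlyOn a (a p₀) (𝓝 p₀) U) (hac : deriv (a p₀) c = 0)
    (hba : ∀ᶠ q in 𝓝 (p₀, c), deriv (a q.1) q.2 = 0 → deriv (b q.1) q.2 = 0)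
    {δ : ℝ} (hδ : 0 < δ) :
    ∀ᶠ p in 𝓝 p₀, ∃ z ∈ U ∩ ball c δ, deriv (a p) z = 0 ∧ deriv (b p) z = 0 := by
  obtain ⟨I, hI, B, hB, hIB⟩ := mem_nhds_prod_iff.1 hba
  have hda : ∀ p, AnalyticOnNhd ℂ (deriv (a p)) U := fun p => ((ha p).analyticOnNhd hU).deriv
  rcases (hda p₀ c hc).eventually_eq_zero_or_eventually_ne_zero with hdeg | hiso
  · have hdeg' : deriv (b p₀) =ᶠ[𝓝 c] 0 := by
      filter_upwards [hdeg, hB] with z hz hzB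
      exact hIB (Set.mk_mem_prod (mem_of_mem_nhds hI) hzB) hz
    obtain ⟨α, hα⟩ := exists_forall_eq_of_deriv_eventuallyEq_zero hU hUc (ha p₀) hc hdeg
    obtain ⟨β, hβ⟩ := exists_forall_eq_of_deriv_eventuallyEq_zero hU hUc hb hc hdeg'
    exact (hab ⟨(α, β), fun z hz => by rw [hα z hz, hβ z hz]⟩).elim
  obtain ⟨ρ, hρ, hρsub⟩ := Metric.mem_nhds_iff.1
    (inter_mem (inter_mem hB (hU.mem_nhds hc)) (ball_mem_nhds c hδ))
  have hzero := (ha_lim.deriv (Eventually.of_forall ha) hU).eventually_exists_mem_ball_eq_zero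
    hU (Eventually.of_forall fun p => (hda p).differentiableOn) (hda p₀).continuousOn hc hac
    hiso hρ
  filter_upwards [hzero, hI] with p ⟨z, hz, hza⟩ hp
  obtain ⟨⟨hzB, hzU⟩, hzδ⟩ := hρsub hz
  exact ⟨z, ⟨hzU, hzδ⟩, hza, hIB (Set.mk_mem_prod hp hzB) hza⟩

/-- stability of critical points.  Let `g^ε = (g₀^ε, g₁^ε) : U → ℂ²` be a
family of nonconstant holomorphic maps on a connected open neighbourhood `U` of `0`,
jointly continuous in `(ε, z)`, with `(g⁰)'(0) = (0,0)`.  If the projectivized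
derivatives `h^ε = [-(g₁^ε)' : (g₀^ε)']` extend to a map `H` into `ℂℙ¹` that is
(jointly) continuous, then for every `ε` sufficiently close to `0` there is a point
`z_ε ∈ U` arbitrarily close to `0` with `(g^ε)'(z_ε) = (0,0)`. -/
theorem critical_points_stable (U : Set ℂ) (hU : IsOpen U) (hUc : IsConnected U)
    (h0U : (0 : ℂ) ∈ U) (g0 g1 : ℝ → ℂ → ℂ)
    (hol0 : ∀ ε : ℝ, DifferentiableOn ℂ (g0 ε) U)
    (hol1 : ∀ ε : ℝ, DifferentiableOn ℂ (g1 ε) U)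
    (hnc : ∀ ε : ℝ, ¬ ∃ c : ℂ × ℂ, ∀ z ∈ U, (g0 ε z, g1 ε z) = c)
    (hcont : ContinuousOn (fun p : ℝ × ℂ => (g0 p.1 p.2, g1 p.1 p.2))
      (Set.univ ×ˢ U))
    (hcrit : deriv (g0 0) 0 = 0 ∧ deriv (g1 0) 0 = 0)
    (H : ℝ → ℂ → ℙ ℂ (Fin 2 → ℂ))
    (hHcont : ContinuousOn (fun p : ℝ × ℂ => H p.1 p.2) (Set.univ ×ˢ U))
    (hHeq : ∀ (ε : ℝ), ∀ z ∈ U,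
      ∀ hne : (![-(deriv (g1 ε) z), deriv (g0 ε) z] : Fin 2 → ℂ) ≠ 0,
      H ε z = Projectivization.mk ℂ _ hne) :
    ∀ δ > 0, ∀ᶠ ε in 𝓝 (0 : ℝ), ∃ z ∈ U, ‖z‖ < δ ∧
      deriv (g0 ε) z = 0 ∧ deriv (g1 ε) z = 0 := by
  intro δ hδ
  have hUU : Set.univ ×ˢ U ∈ 𝓝 ((0 : ℝ), (0 : ℂ)) := prod_mem_nhds univ_mem (hU.mem_nhds h0U)
  set w : ℝ × ℂ → Fin 2 → ℂ := fun q => ![-(deriv (g1 q.1) q.2), deriv (g0 q.1) q.2]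
  obtain ⟨i, hi⟩ := Projectivization.exists_eventually_apply_eq_zero_imp (w := w)
    (hHcont.continuousAt hUU) (by filter_upwards [hUU] with q hq using hHeq q.1 q.2 hq.2)
  have hlim : ∀ g : ℝ → ℂ → ℂ, ContinuousOn (fun q : ℝ × ℂ => g q.1 q.2) (Set.univ ×ˢ U) →
      TendstoLocallyUniformlyOn g (g 0) (𝓝 0) U :=
    fun g hg => hg.tendstoLocallyUniformlyOn_of_prod univ_mem hU
  fin_cases i
  · have hnc' : ¬ ∃ v : ℂ × ℂ, ∀ z ∈ U, (g1 0 z, g0 0 z) = v := fun ⟨v, hv⟩ =>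
      hnc 0 ⟨v.swap, fun z hz => by rw [← hv z hz]; rfl⟩
    have hba : ∀ᶠ q in 𝓝 (0, 0), deriv (g1 q.1) q.2 = 0 → deriv (g0 q.1) q.2 = 0 := by
      filter_upwards [hi] with q hq h1
      simpa [w] using congrFun (hq (by simp [w, h1])) 1
    filter_upwards [eventually_exists_common_critical_point hU hUc.isPreconnected h0U hol1
      (hol0 0) hnc' (hlim g1 (continuous_snd.comp_continuousOn hcont)) hcrit.2 hba hδ]
      with ε ⟨z, ⟨hzU, hzδ⟩, h1, h0⟩
    exact ⟨z, hzU, mem_ball_zero_iff.1 hzδ, h0, h1⟩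
  · have hab : ∀ᶠ q in 𝓝 (0, 0), deriv (g0 q.1) q.2 = 0 → deriv (g1 q.1) q.2 = 0 := by
      filter_upwards [hi] with q hq h0
      simpa [w] using congrFun (hq (by simp [w, h0])) 0
    filter_upwards [eventually_exists_common_critical_point hU hUc.isPreconnected h0U hol0
      (hol1 0) (hnc 0) (hlim g0 (continuous_fst.comp_continuousOn hcont)) hcrit.1 hab hδ]
      with ε ⟨z, ⟨hzU, hzδ⟩, h0, h1⟩
    exact ⟨z, hzU, mem_ball_zero_iff.1 hzδ, h0, h1⟩
end

section
/- Let M be a connected complex manifold (or connected open subset of ℂ), let Q ⊆ ℂ^m be compact, and let f : M × Q → ℂ be continuous with f_p = f(·,p) holomorphic and nonconstant for every p ∈ Q. Then there exist finitely many distinct points x_1,…,x_n ∈ M such that for every p ∈ Q, the function f_p is nonconstant on the finite set {x_1,…,x_n}. -/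
/-!
For each `p ∈ Q` pick two points of `M` at which `f_p` takes different values. By continuity in `p`,
the same pair still separates the values of `f_q` for all `q ∈ Q` near `p`; compactness of `Q`
leaves finitely many such pairs, and their union is the required finite set.
-/

open Filter Topology

theorem ContinuousWithinAt.eventually_ne_of_ne {X β : Type*} [TopologicalSpace X]
    [TopologicalSpace β] [T2Space β] {g h : X → β} {K : Set X} {p : X}
    (hg : ContinuousWithinAt g K p) (hh : ContinuousWithinAt h K p) (hne : g p ≠ h p) :
    ∀ᶠ q in 𝓝[K] p, g q ≠ h q :=
  (hg.tendsto.prodMk_nhds hh.tendsto).eventually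
    ((isOpen_ne_fun continuous_fst continuous_snd).mem_nhds hne)

theorem IsCompact.exists_finset_forall_exists_ne {α X β : Type*} [TopologicalSpace X]
    [TopologicalSpace β] [T2Space β] {K : Set X} (hK : IsCompact K) {s : Set α}
    {g : α → X → β} (hg : ∀ a ∈ s, ContinuousOn (g a) K)
    (hne : ∀ p ∈ K, ∃ a ∈ s, ∃ b ∈ s, g a p ≠ g b p) :
    ∃ t : Finset α, ↑t ⊆ s ∧ ∀ p ∈ K, ∃ a ∈ t, ∃ b ∈ t, g a p ≠ g b p := by
  classical
  choose a ha b hb hab using hne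
  obtain ⟨u, hKu⟩ := hK.elim_nhdsWithin_subcover'
    (fun p hp => {q | g (a p hp) q ≠ g (b p hp) q})
    fun p hp => ((hg _ (ha p hp)).continuousWithinAt hp).eventually_ne_of_ne
      ((hg _ (hb p hp)).continuousWithinAt hp) (hab p hp)
  refine ⟨u.image (fun p : K => a p p.2) ∪ u.image (fun p : K => b p p.2), ?_, fun q hq => ?_⟩
  · simp only [Finset.coe_union, Finset.coe_image, Set.union_subset_iff, Set.image_subset_iff]
    exact ⟨fun p _ => ha p p.2, fun p _ => hb p p.2⟩
  · obtain ⟨p, hpu, hpq⟩ := Set.mem_iUnion₂.mp (hKu hq)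
    exact ⟨_, Finset.mem_union_left _ (Finset.mem_image_of_mem _ hpu),
      _, Finset.mem_union_right _ (Finset.mem_image_of_mem _ hpu), hpq⟩

theorem Finset.exists_injective_fin_enum {α : Type*} (t : Finset α) :
    ∃ (n : ℕ) (x : Fin n → α), Function.Injective x ∧ ∀ a, a ∈ t ↔ ∃ i, x i = a :=
  ⟨t.card, fun i => t.equivFin.symm i, Subtype.val_injective.comp t.equivFin.symm.injective,
    fun a => ⟨fun ha => ⟨t.equivFin ⟨a, ha⟩, by simp⟩, fun ⟨i, hi⟩ => hi ▸ (t.equivFin.symm i).2⟩⟩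

theorem nonconstancy_at_finitely_many_points_general (M : Set ℂ) (m : ℕ) (Q : Set (Fin m → ℂ))
    (hQ : IsCompact Q) (f : ℂ → (Fin m → ℂ) → ℂ)
    (hcont : ContinuousOn (fun q : ℂ × (Fin m → ℂ) => f q.1 q.2) (M ×ˢ Q))
    (hnc : ∀ p ∈ Q, ¬ ∃ c : ℂ, ∀ z ∈ M, f z p = c) :
    ∃ (n : ℕ) (x : Fin n → ℂ), (∀ i, x i ∈ M) ∧ Function.Injective x ∧
      ∀ p ∈ Q, ∃ i j : Fin n, f (x i) p ≠ f (x j) p := by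
  have hne : ∀ p ∈ Q, ∃ a ∈ M, ∃ b ∈ M, f a p ≠ f b p := by
    intro p hp
    push Not at hnc
    obtain ⟨a, ha, -⟩ := hnc p hp 0
    obtain ⟨b, hb, hba⟩ := hnc p hp (f a p)
    exact ⟨b, hb, a, ha, hba⟩
  obtain ⟨t, htM, ht⟩ := hQ.exists_finset_forall_exists_ne
    (fun a ha => hcont.uncurry_left a ha) hne
  obtain ⟨n, x, hx, hxt⟩ := t.exists_injective_fin_enum
  refine ⟨n, x, fun i => htM ((hxt _).mpr ⟨i, rfl⟩), hx, fun p hp => ?_⟩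
  obtain ⟨a, ha, b, hb, hab⟩ := ht p hp
  obtain ⟨i, rfl⟩ := (hxt a).mp ha
  obtain ⟨j, rfl⟩ := (hxt b).mp hb
  exact ⟨i, j, hab⟩

/-- let `M ⊆ ℂ` be open and connected, `Q ⊆ ℂᵐ` compact, and
`f : M × Q → ℂ` continuous with `f_p = f(·, p)` holomorphic and nonconstant on `M`
for every `p ∈ Q`.  Then there are finitely many distinct points `x₁, …, x_n ∈ M`
such that for every `p ∈ Q` the function `f_p` is nonconstant on `{x₁, …, x_n}`. -/
theorem nonconstancy_at_finitely_many_points (M : Set ℂ) (hM : IsOpen M)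
    (hMc : IsConnected M) (m : ℕ) (Q : Set (Fin m → ℂ)) (hQ : IsCompact Q)
    (f : ℂ → (Fin m → ℂ) → ℂ)
    (hcont : ContinuousOn (fun q : ℂ × (Fin m → ℂ) => f q.1 q.2) (M ×ˢ Q))
    (hhol : ∀ p ∈ Q, DifferentiableOn ℂ (fun z => f z p) M)
    (hnc : ∀ p ∈ Q, ¬ ∃ c : ℂ, ∀ z ∈ M, f z p = c) :
    ∃ (n : ℕ) (x : Fin n → ℂ), (∀ i, x i ∈ M) ∧ Function.Injective x ∧
      ∀ p ∈ Q, ∃ i j : Fin n, f (x i) p ≠ f (x j) p :=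
  nonconstancy_at_finitely_many_points_general M m Q hQ f hcont hnc
end

section
/- Let M be a connected Riemann surface, n ≥ 1, z⁰ a point, and let f = (z⁰, [h_0 : ⋯ : h_n]) : M → {z⁰} × ℂℙ^n be a nondegenerate vertical holomorphic map. Then any holomorphic map into ℂℙ^n sufficiently uniformly close to [h_0 : ⋯ : h_n] on a compact set K ⊆ M with nonempty interior is also nondegenerate. -/
/-! The values of `h` on the open set `interior K` already span `ℂⁿ⁺¹`: a linear functional
killing them kills `h` on all of `M` by the identity principle. Choose points of `interior K`
at which these values form a basis. Linear independence of finitely many vectors is an open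
condition, so the values at those points of any `g` uniformly close to `h` on `K` still span. -/

open Filter Set Submodule Topology

theorem AnalyticOnNhd.span_image_eq_of_isOpen_subset {𝕜 E V : Type*} [NontriviallyNormedField 𝕜]
    [CompleteSpace 𝕜] [NormedAddCommGroup E] [NormedSpace 𝕜 E] [NormedAddCommGroup V]
    [NormedSpace 𝕜 V] [FiniteDimensional 𝕜 V] {f : E → V} {M U : Set E}
    (hf : AnalyticOnNhd 𝕜 f M) (hM : IsPreconnected M) (hU : IsOpen U) (hUne : U.Nonempty)
    (hUM : U ⊆ M) : span 𝕜 (f '' U) = span 𝕜 (f '' M) := by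
  refine le_antisymm (span_mono (image_mono hUM)) (span_le.2 ?_)
  rintro - ⟨z, hz, rfl⟩
  by_contra hzU
  obtain ⟨φ, hφz, hφU⟩ := exists_dual_map_eq_bot_of_notMem hzU inferInstance
  obtain ⟨z₀, hz₀⟩ := hUne
  have hφf : AnalyticOnNhd 𝕜 (fun w => φ (f w)) M :=
    (LinearMap.toContinuousLinearMap φ).comp_analyticOnNhd hf
  have hφf_U : (fun w => φ (f w)) =ᶠ[𝓝 z₀] 0 := by
    filter_upwards [hU.mem_nhds hz₀] with w hw
    show φ (f w) = 0
    rw [← mem_bot 𝕜, ← hφU]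
    exact mem_map_of_mem (subset_span ⟨w, hw, rfl⟩)
  exact hφz (hφf.eqOn_zero_of_preconnected_of_eventuallyEq_zero hM (hUM hz₀) hφf_U hz)

theorem Module.Basis.eventually_span_range_eq_top {𝕜 V ι : Type*} [NontriviallyNormedField 𝕜]
    [CompleteSpace 𝕜] [NormedAddCommGroup V] [NormedSpace 𝕜 V] [Finite ι] (b : Basis ι 𝕜 V) :
    ∀ᶠ w in 𝓝 (⇑b), span 𝕜 (range w) = ⊤ := by
  cases nonempty_fintype ι
  have := Module.Finite.of_basis b
  filter_upwards [b.linearIndependent.eventually] with w hw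
  exact hw.span_eq_top_of_card_eq_finrank' (Module.finrank_eq_card_basis b).symm

theorem nondegenerate_is_open_general (M : Set ℂ) (hM : IsOpen M) (hMc : IsConnected M)
    (n : ℕ) (K : Set ℂ) (hKM : K ⊆ M)
    (hKint : (interior K).Nonempty) (h : ℂ → (Fin (n + 1) → ℂ))
    (hhol : DifferentiableOn ℂ h M)
    (hnondeg : ∀ S : Submodule ℂ (Fin (n + 1) → ℂ), (∀ z ∈ M, h z ∈ S) → S = ⊤) :
    ∃ ε > 0, ∀ g : ℂ → (Fin (n + 1) → ℂ),
      DifferentiableOn ℂ g M → (∀ z ∈ M, g z ≠ 0) →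
      (∀ z ∈ K, ‖g z - h z‖ < ε) →
      ∀ S : Submodule ℂ (Fin (n + 1) → ℂ), (∀ z ∈ M, g z ∈ S) → S = ⊤ := by
  have hUM : interior K ⊆ M := interior_subset.trans hKM
  have hspan : span ℂ (h '' interior K) = ⊤ := by
    refine hnondeg _ fun z hz => ?_
    rw [(hhol.analyticOnNhd hM).span_image_eq_of_isOpen_subset hMc.isPreconnected
      isOpen_interior hKint hUM]
    exact subset_span ⟨z, hz, rfl⟩
  let b := Module.Basis.ofSpan hspan.ge
  have : Finite _ := Module.Finite.finite_basis b
  choose z hzK hzb using fun i => Module.Basis.ofSpan_subset hspan.ge (mem_range_self (f := b) i)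
  obtain ⟨ε, hε, hε_span⟩ := Metric.eventually_nhds_iff.1 b.eventually_span_range_eq_top
  refine ⟨ε, hε, fun g _ _ hgh S hgS => top_unique ?_⟩
  have hgz : dist (g ∘ z) b < ε := by
    refine (dist_pi_lt_iff hε).2 fun i => ?_
    rw [dist_eq_norm, Function.comp_apply, ← hzb i]
    exact hgh _ (interior_subset (hzK i))
  rw [← hε_span hgz, span_le]
  rintro - ⟨i, rfl⟩
  exact hgS _ (hUM (hzK i))

/-- Remark 6.5: nondegeneracy is an open condition.  Let `M ⊆ ℂ` be open
and connected, let `h : M → ℂ^{n+1} \ {0}` be holomorphic and nondegenerate (the image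
of its projectivization lies in no proper projective linear subspace of `ℂℙⁿ`,
equivalently the image of `h` lies in no proper linear subspace), and let `K ⊆ M` be
compact with nonempty interior.  Then there is `ε > 0` such that every holomorphic
nonvanishing map `g : M → ℂ^{n+1}` that is uniformly `ε`-close to `h` on `K` is also
nondegenerate. -/
theorem nondegenerate_is_open (M : Set ℂ) (hM : IsOpen M) (hMc : IsConnected M)
    (n : ℕ) (hn : 1 ≤ n) (K : Set ℂ) (hK : IsCompact K) (hKM : K ⊆ M)
    (hKint : (interior K).Nonempty) (h : ℂ → (Fin (n + 1) → ℂ))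
    (hhol : DifferentiableOn ℂ h M) (hne : ∀ z ∈ M, h z ≠ 0)
    (hnondeg : ∀ S : Submodule ℂ (Fin (n + 1) → ℂ), (∀ z ∈ M, h z ∈ S) → S = ⊤) :
    ∃ ε > 0, ∀ g : ℂ → (Fin (n + 1) → ℂ),
      DifferentiableOn ℂ g M → (∀ z ∈ M, g z ≠ 0) →
      (∀ z ∈ K, ‖g z - h z‖ < ε) →
      ∀ S : Submodule ℂ (Fin (n + 1) → ℂ), (∀ z ∈ M, g z ∈ S) → S = ⊤ :=
  nondegenerate_is_open_general M hM hMc n K hKM hKint h hhol hnondeg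
end

section
/- Let E be a topological space that is the increasing union of second-countable metrisable subspaces E_1 ⊆ E_2 ⊆ ⋯ with continuous inclusions, endowed with the colimit topology, such that E is Hausdorff, and such that a sequence converges in E iff it lies in some E_k together with its limit and converges there. If L ⊆ E is sequentially compact and L ⊄ E_k for every k, then a contradiction arises: there is a sequence x_k ∈ L \ E_k with no subsequence converging in E. Hence every sequentially compact subset L of E is contained in some E_k. -/
/-! If `L` escaped every `E_k`, pick `x_k ∈ L \ E_k`. A convergent subsequence `x_{φ n}` lies,
by the sequential convergence criterion, in a single `E_k`; but its `k`-th term lies outside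
`E_{φ k} ⊇ E_k`. -/

open Filter Topology

theorem Set.exists_subset_of_forall_subseq_mem {E : Type*} {S : ℕ → Set E} (hS : Monotone S)
    {L : Set E}
    (hL : ∀ u : ℕ → E, (∀ n, u n ∈ L) → ∃ φ : ℕ → ℕ, StrictMono φ ∧ ∃ k, ∀ n, u (φ n) ∈ S k) :
    ∃ k, L ⊆ S k := by
  by_contra! hescape
  choose u huL hunot using fun k => Set.not_subset.mp (hescape k)
  obtain ⟨φ, hφ, k, hk⟩ := hL u huL
  exact hunot (φ k) (hS (hφ.id_le k) (hk k))

theorem monotone_range_of_comp_eq {X : ℕ → Type*} {E : Type*} (i : ∀ k, X k → X (k + 1))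
    (j : ∀ k, X k → E) (hcompat : ∀ k (x : X k), j (k + 1) (i k x) = j k x) :
    Monotone fun k => Set.range (j k) :=
  monotone_nat_of_le_succ fun k => by
    rintro _ ⟨x, rfl⟩
    exact ⟨i k x, hcompat k x⟩

theorem silva_seq_compact_subset_of_step_general
    (X : ℕ → Type*) [∀ k, TopologicalSpace (X k)]
    (E : Type*) [TopologicalSpace E]
    (i : ∀ k, X k → X (k + 1))
    (j : ∀ k, X k → E)
    (hcompat : ∀ k (x : X k), j (k + 1) (i k x) = j k x)
    (hseq : ∀ (u : ℕ → E) (a : E),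
      Tendsto u atTop (nhds a) ↔
        ∃ k, ∃ v : ℕ → X k, ∃ b : X k, (∀ n, j k (v n) = u n) ∧ j k b = a ∧
          Tendsto v atTop (nhds b))
    (L : Set E)
    (hL : ∀ u : ℕ → E, (∀ n, u n ∈ L) → ∃ a ∈ L, ∃ φ : ℕ → ℕ,
      StrictMono φ ∧ Tendsto (u ∘ φ) atTop (nhds a)) :
    ∃ k, L ⊆ Set.range (j k) := by
  refine Set.exists_subset_of_forall_subseq_mem (monotone_range_of_comp_eq i j hcompat) ?_
  intro u hu
  obtain ⟨a, -, φ, hφ, htends⟩ := hL u hu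
  obtain ⟨k, v, -, hv, -⟩ := (hseq (u ∘ φ) a).mp htends
  exact ⟨φ, hφ, k, fun n => ⟨v n, hv n⟩⟩

/-- first half of Proposition 7.4: let `E` be a Hausdorff topological
space which is the colimit of an increasing sequence of second-countable metrisable
spaces `X k` with continuous injective inclusions `j k : X k → E` (compatible with
continuous injective bonding maps `i k : X k → X (k+1)`), such that a sequence
converges in `E` iff it lies in some `X k` together with its limit and converges
there.  Then every sequentially compact subset `L` of `E` is contained in (the image
of) some `X k`. -/
theorem silva_seq_compact_subset_of_step
    (X : ℕ → Type*) [∀ k, TopologicalSpace (X k)]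
    [∀ k, SecondCountableTopology (X k)] [∀ k, TopologicalSpace.MetrizableSpace (X k)]
    (E : Type*) [TopologicalSpace E] [T2Space E]
    (i : ∀ k, X k → X (k + 1)) (hi : ∀ k, Continuous (i k))
    (hiinj : ∀ k, Function.Injective (i k))
    (j : ∀ k, X k → E) (hj : ∀ k, Continuous (j k))
    (hjinj : ∀ k, Function.Injective (j k))
    (hcompat : ∀ k (x : X k), j (k + 1) (i k x) = j k x)
    (hunion : ∀ e : E, ∃ k, ∃ x : X k, j k x = e)
    (hseq : ∀ (u : ℕ → E) (a : E),
      Tendsto u atTop (nhds a) ↔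
        ∃ k, ∃ v : ℕ → X k, ∃ b : X k, (∀ n, j k (v n) = u n) ∧ j k b = a ∧
          Tendsto v atTop (nhds b))
    (L : Set E)
    (hL : ∀ u : ℕ → E, (∀ n, u n ∈ L) → ∃ a ∈ L, ∃ φ : ℕ → ℕ,
      StrictMono φ ∧ Tendsto (u ∘ φ) atTop (nhds a)) :
    ∃ k, L ⊆ Set.range (j k) :=
  silva_seq_compact_subset_of_step_general X E i j hcompat hseq L hL
end

section
/- Let E = colim E_k be as in the previous statement, and suppose additionally that each E_k is the increasing union of open sets V_1^k ⊆ V_2^k ⊆ ⋯ with V_j^k relatively compact in E_{k+1} and V_j^k ⊆ V_j^{k+1}. If L ⊆ E_1 is sequentially compact in E, then L is closed in each E_k, and L is compact in E_k for all sufficiently large k. -/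
/-!
Because `L` is sequentially compact and every convergent sequence of `E` eventually lies in
one of the sets `j k '' V k m`, which increase in both indices, `L` already lies in a single
`j n '' V n n`. Its trace on `X (n + 1)` is then a closed subset of the compact set
`closure (i n '' V n n)`, and compactness propagates to every later step along the continuous
inclusions. Closedness holds because a sequentially compact subset of a Hausdorff space is
sequentially closed and each `X k` is metrizable.
-/

open Filter Topology Set

theorem IsSeqCompact.isSeqClosed {E : Type*} [TopologicalSpace E] [T2Space E] {L : Set E}
    (hL : IsSeqCompact L) : IsSeqClosed L := by
  intro u a hu hua
  obtain ⟨b, hbL, φ, hφ, hub⟩ := hL hu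
  rwa [tendsto_nhds_unique (hua.comp hφ.tendsto_atTop) hub]

theorem IsSeqCompact.exists_subset_of_eventually_mem {E : Type*} [TopologicalSpace E]
    {L : Set E} (hL : IsSeqCompact L) {W : ℕ → Set E} (hW : Monotone W)
    (hconv : ∀ (u : ℕ → E) (a : E), Tendsto u atTop (𝓝 a) → ∃ M, ∀ᶠ n in atTop, u n ∈ W M) :
    ∃ n, L ⊆ W n := by
  by_contra! hnot
  choose u huL huW using fun n => not_subset.1 (hnot n)
  obtain ⟨a, -, φ, hφ, hua⟩ := hL huL
  obtain ⟨M, hM⟩ := hconv _ a hua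
  obtain ⟨n, hn, hnM⟩ := (hM.and (eventually_ge_atTop M)).exists
  exact huW (φ n) (hW (hnM.trans hφ.le_apply) hn)

section SilvaStep

variable {X : ℕ → Type*} {E : Type*} {i : ∀ k, X k → X (k + 1)} {j : ∀ k, X k → E}

theorem image_subset_image_of_le {V : ∀ k : ℕ, ℕ → Set (X k)}
    (hcompat : ∀ k (x : X k), j (k + 1) (i k x) = j k x)
    (hVmono : ∀ k m, V k m ⊆ V k (m + 1)) (hVstep : ∀ k m, i k '' V k m ⊆ V (k + 1) m)
    {k k' m m' : ℕ} (hk : k ≤ k') (hm : m ≤ m') : j k '' V k m ⊆ j k' '' V k' m' := by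
  have hstep : ∀ k, j k '' V k m' ⊆ j (k + 1) '' V (k + 1) m' := by
    rintro k _ ⟨x, hx, rfl⟩
    exact ⟨i k x, hVstep k m' ⟨x, hx, rfl⟩, hcompat k x⟩
  exact (image_mono (monotone_nat_of_le_succ (hVmono k) hm)).trans
    (monotone_nat_of_le_succ hstep hk)

theorem range_subset_range_of_le (hcompat : ∀ k (x : X k), j (k + 1) (i k x) = j k x)
    {k k' : ℕ} (hk : k ≤ k') : range (j k) ⊆ range (j k') :=
  monotone_nat_of_le_succ (fun k => range_subset_iff.2 fun x => ⟨i k x, hcompat k x⟩) hk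

theorem preimage_succ_subset_image (hjinj : ∀ k, Function.Injective (j k))
    (hcompat : ∀ k (x : X k), j (k + 1) (i k x) = j k x) {k : ℕ} {L : Set E} {S : Set (X k)}
    (hLS : L ⊆ j k '' S) : j (k + 1) ⁻¹' L ⊆ i k '' S := by
  intro y hy
  obtain ⟨x, hxS, hxy⟩ := hLS hy
  exact ⟨x, hxS, hjinj (k + 1) (by rw [hcompat, hxy])⟩

end SilvaStep

theorem silva_seq_compact_is_compact_in_step_general
    (X : ℕ → Type*) [∀ k, TopologicalSpace (X k)]
    [∀ k, TopologicalSpace.MetrizableSpace (X k)]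
    (E : Type*) [TopologicalSpace E] [T2Space E]
    (i : ∀ k, X k → X (k + 1)) (hi : ∀ k, Continuous (i k))
    (j : ∀ k, X k → E) (hj : ∀ k, Continuous (j k))
    (hjinj : ∀ k, Function.Injective (j k))
    (hcompat : ∀ k (x : X k), j (k + 1) (i k x) = j k x)
    (hseq : ∀ (u : ℕ → E) (a : E),
      Tendsto u atTop (nhds a) ↔
        ∃ k, ∃ v : ℕ → X k, ∃ b : X k, (∀ n, j k (v n) = u n) ∧ j k b = a ∧
          Tendsto v atTop (nhds b))
    (V : ∀ k : ℕ, ℕ → Set (X k))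
    (hVopen : ∀ k m, IsOpen (V k m))
    (hVmono : ∀ k m, V k m ⊆ V k (m + 1))
    (hVcover : ∀ k, (⋃ m, V k m) = Set.univ)
    (hVrel : ∀ k m, IsCompact (closure (i k '' V k m)))
    (hVstep : ∀ k m, i k '' V k m ⊆ V (k + 1) m)
    (L : Set E) (hL0 : L ⊆ Set.range (j 0))
    (hL : ∀ u : ℕ → E, (∀ n, u n ∈ L) → ∃ a ∈ L, ∃ φ : ℕ → ℕ,
      StrictMono φ ∧ Tendsto (u ∘ φ) atTop (nhds a)) :
    (∀ k, IsClosed (j k ⁻¹' L)) ∧ ∃ K : ℕ, ∀ k ≥ K, IsCompact (j k ⁻¹' L) := by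
  have hL : IsSeqCompact L := fun u hu => hL u hu
  have hclosed k : IsClosed (j k ⁻¹' L) :=
    (hL.isSeqClosed.preimage (hj k).seqContinuous).isClosed
  have hWmono : Monotone fun n => j n '' V n n := fun _ _ h =>
    image_subset_image_of_le hcompat hVmono hVstep h h
  obtain ⟨n, hn⟩ := hL.exists_subset_of_eventually_mem hWmono fun u a hua => by
    obtain ⟨k, v, b, hvu, -, hvb⟩ := (hseq u a).1 hua
    obtain ⟨M, hbM⟩ := mem_iUnion.1 (hVcover k ▸ mem_univ b)
    refine ⟨max k M, ?_⟩
    filter_upwards [hvb.eventually ((hVopen k M).mem_nhds hbM)] with m hm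
    exact image_subset_image_of_le hcompat hVmono hVstep (le_max_left k M) (le_max_right k M)
      ⟨v m, hm, hvu m⟩
  refine ⟨hclosed, n + 1, fun k hk => ?_⟩
  induction k, hk using Nat.le_induction with
  | base =>
    exact (hVrel n n).of_isClosed_subset (hclosed _)
      ((preimage_succ_subset_image hjinj hcompat hn).trans subset_closure)
  | succ k _ hK =>
    have hLk : L ⊆ j k '' (j k ⁻¹' L) :=
      (image_preimage_eq_of_subset (hL0.trans (range_subset_range_of_le hcompat k.zero_le))).ge
    exact (hK.image (hi k)).of_isClosed_subset (hclosed _)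
      (preimage_succ_subset_image hjinj hcompat hLk)

/-- Proposition 7.4: let `E = colim X k` be a Silva space as in
Statement 15, and assume in addition that each `X k` is the increasing union of open
sets `V k 1 ⊆ V k 2 ⊆ ⋯` whose images in `X (k+1)` are relatively compact and satisfy
`V k j ⊆ V (k+1) j` (via the inclusion).  If `L` is a subset of (the image of) `X 0`
that is sequentially compact in `E`, then `L` is closed in each `X k` and compact in
`X k` for all sufficiently large `k`. -/
theorem silva_seq_compact_is_compact_in_step
    (X : ℕ → Type*) [∀ k, TopologicalSpace (X k)]
    [∀ k, SecondCountableTopology (X k)] [∀ k, TopologicalSpace.MetrizableSpace (X k)]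
    (E : Type*) [TopologicalSpace E] [T2Space E]
    (i : ∀ k, X k → X (k + 1)) (hi : ∀ k, Continuous (i k))
    (hiinj : ∀ k, Function.Injective (i k))
    (j : ∀ k, X k → E) (hj : ∀ k, Continuous (j k))
    (hjinj : ∀ k, Function.Injective (j k))
    (hcompat : ∀ k (x : X k), j (k + 1) (i k x) = j k x)
    (hunion : ∀ e : E, ∃ k, ∃ x : X k, j k x = e)
    (hseq : ∀ (u : ℕ → E) (a : E),
      Tendsto u atTop (nhds a) ↔
        ∃ k, ∃ v : ℕ → X k, ∃ b : X k, (∀ n, j k (v n) = u n) ∧ j k b = a ∧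
          Tendsto v atTop (nhds b))
    (V : ∀ k : ℕ, ℕ → Set (X k))
    (hVopen : ∀ k m, IsOpen (V k m))
    (hVmono : ∀ k m, V k m ⊆ V k (m + 1))
    (hVcover : ∀ k, (⋃ m, V k m) = Set.univ)
    (hVrel : ∀ k m, IsCompact (closure (i k '' V k m)))
    (hVstep : ∀ k m, i k '' V k m ⊆ V (k + 1) m)
    (L : Set E) (hL0 : L ⊆ Set.range (j 0))
    (hL : ∀ u : ℕ → E, (∀ n, u n ∈ L) → ∃ a ∈ L, ∃ φ : ℕ → ℕ,
      StrictMono φ ∧ Tendsto (u ∘ φ) atTop (nhds a)) :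
    (∀ k, IsClosed (j k ⁻¹' L)) ∧ ∃ K : ℕ, ∀ k ≥ K, IsCompact (j k ⁻¹' L) :=
  silva_seq_compact_is_compact_in_step_general X E i hi j hj hjinj hcompat hseq V hVopen hVmono
    hVcover hVrel hVstep L hL0 hL
end

section
/- Let K be a sequentially compact, first-countable topological space, let E = colim E_k be a Silva space as above with each E_k metrisable and E Hausdorff, and let f : K → E be continuous. Then there exist k ≥ 1 and a continuous map g : K → E_k with f = j_k ∘ g, where j_k : E_k → E is the inclusion. -/
open Filter Topology Set

/-!
Write `S N = j N '' V N N`; these sets increase with `N`. Every convergent sequence of `E`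
converges in some `X k`, so together with its limit it is compact there and is therefore
contained in a single `V k M`; hence it lies in one `S N`. If `f(K)` were contained in no
`S N`, choose `f (u n) ∉ S n`: a subsequence of `u` converges, its image under `f` lies in
some `S N`, and evaluating at index `N` contradicts the choice. So `f = j N ∘ h` with `h`
valued in `V N N`, and `i N ∘ h` takes values in the compact set `closure (i N '' V N N)`, on
which the continuous injection `j (N + 1)` into the Hausdorff space `E` is a homeomorphism
onto its image; this makes `i N ∘ h` continuous.
-/

theorem Filter.Tendsto.exists_forall_mem_of_monotone_open_cover {X : Type*}
    [TopologicalSpace X] {V : ℕ → Set X} (hVopen : ∀ m, IsOpen (V m)) (hVmono : Monotone V)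
    (hVcover : ⋃ m, V m = univ) {v : ℕ → X} {b : X} (hv : Tendsto v atTop (𝓝 b)) :
    ∃ M, ∀ n, v n ∈ V M := by
  obtain ⟨M, hM⟩ := hv.isCompact_insert_range.elim_directed_cover V hVopen
    (hVcover ▸ subset_univ _) hVmono.directed_le
  exact ⟨M, fun n => hM (mem_insert_of_mem _ (mem_range_self n))⟩

theorem exists_forall_mem_of_forall_tendsto {K E : Type*} [TopologicalSpace K]
    [TopologicalSpace E]
    (hKseq : ∀ u : ℕ → K, ∃ a : K, ∃ φ : ℕ → ℕ, StrictMono φ ∧ Tendsto (u ∘ φ) atTop (𝓝 a))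
    {f : K → E} (hf : Continuous f) {S : ℕ → Set E} (hS : Monotone S)
    (hconv : ∀ (w : ℕ → E) (a : E), Tendsto w atTop (𝓝 a) → ∃ N, ∀ n, w n ∈ S N) :
    ∃ N, ∀ x, f x ∈ S N := by
  by_contra! hnot
  choose u hu using hnot
  obtain ⟨a, φ, hφ, hlim⟩ := hKseq u
  obtain ⟨N, hN⟩ := hconv _ _ ((hf.tendsto a).comp hlim)
  exact hu (φ N) (hS hφ.le_apply (hN N))

theorem Continuous.of_comp_of_injOn_of_isCompact {K Y E : Type*} [TopologicalSpace K]
    [TopologicalSpace Y] [TopologicalSpace E] [T2Space E] {e : Y → E} (he : Continuous e)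
    {C : Set Y} (hC : IsCompact C) (heC : InjOn e C) {g : K → Y} (hgC : ∀ x, g x ∈ C)
    (hcomp : Continuous (e ∘ g)) : Continuous g := by
  have : CompactSpace C := isCompact_iff_compactSpace.mp hC
  have hemb : IsClosedEmbedding (C.domRestrict e) :=
    (he.comp continuous_subtype_val).isClosedEmbedding heC.injective
  have hgC' : Continuous (C.codRestrict g hgC) := hemb.continuous_iff.mpr hcomp
  exact continuous_subtype_val.comp hgC'

section Tower

variable {X : ℕ → Type*} {E : Type*} {i : ∀ k, X k → X (k + 1)} {j : ∀ k, X k → E}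
  {V : ∀ k : ℕ, ℕ → Set (X k)}

theorem image_tower_mono (hcompat : ∀ k (x : X k), j (k + 1) (i k x) = j k x)
    (hVmono : ∀ k m, V k m ⊆ V k (m + 1)) (hVstep : ∀ k m, i k '' V k m ⊆ V (k + 1) m)
    {k k' m m' : ℕ} (hk : k ≤ k') (hm : m ≤ m') : j k '' V k m ⊆ j k' '' V k' m' := by
  have hup : j k '' V k m ⊆ j k' '' V k' m := by
    induction k', hk using Nat.le_induction with
    | base => exact subset_rfl
    | succ k' _ ih =>
      refine ih.trans ?_
      rintro _ ⟨x, hx, rfl⟩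
      exact ⟨i k' x, hVstep k' m ⟨x, hx, rfl⟩, hcompat k' x⟩
  exact hup.trans (image_mono (monotone_nat_of_le_succ (hVmono k') hm))

theorem exists_forall_mem_image_tower_of_tendsto [∀ k, TopologicalSpace (X k)]
    (hcompat : ∀ k (x : X k), j (k + 1) (i k x) = j k x)
    (hVopen : ∀ k m, IsOpen (V k m)) (hVmono : ∀ k m, V k m ⊆ V k (m + 1))
    (hVcover : ∀ k, ⋃ m, V k m = univ) (hVstep : ∀ k m, i k '' V k m ⊆ V (k + 1) m)
    {w : ℕ → E} {k : ℕ} {v : ℕ → X k} {b : X k} (hvw : ∀ n, j k (v n) = w n)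
    (hv : Tendsto v atTop (𝓝 b)) : ∃ N, ∀ n, w n ∈ j N '' V N N := by
  obtain ⟨M, hM⟩ := hv.exists_forall_mem_of_monotone_open_cover (hVopen k)
    (monotone_nat_of_le_succ (hVmono k)) (hVcover k)
  refine ⟨max k M, fun n => ?_⟩
  exact image_tower_mono hcompat hVmono hVstep (le_max_left k M) (le_max_right k M)
    ⟨v n, hM n, hvw n⟩

end Tower

theorem silva_map_from_compact_factors_general
    (K : Type*) [TopologicalSpace K]
    (hKseq : ∀ u : ℕ → K, ∃ a : K, ∃ φ : ℕ → ℕ,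
      StrictMono φ ∧ Tendsto (u ∘ φ) atTop (nhds a))
    (X : ℕ → Type*) [∀ k, TopologicalSpace (X k)]
    (E : Type*) [TopologicalSpace E] [T2Space E]
    (i : ∀ k, X k → X (k + 1))
    (j : ∀ k, X k → E) (hj : ∀ k, Continuous (j k))
    (hjinj : ∀ k, Function.Injective (j k))
    (hcompat : ∀ k (x : X k), j (k + 1) (i k x) = j k x)
    (hseq : ∀ (u : ℕ → E) (a : E),
      Tendsto u atTop (nhds a) ↔
        ∃ k, ∃ v : ℕ → X k, ∃ b : X k, (∀ n, j k (v n) = u n) ∧ j k b = a ∧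
          Tendsto v atTop (nhds b))
    (V : ∀ k : ℕ, ℕ → Set (X k))
    (hVopen : ∀ k m, IsOpen (V k m))
    (hVmono : ∀ k m, V k m ⊆ V k (m + 1))
    (hVcover : ∀ k, (⋃ m, V k m) = Set.univ)
    (hVrel : ∀ k m, IsCompact (closure (i k '' V k m)))
    (hVstep : ∀ k m, i k '' V k m ⊆ V (k + 1) m)
    (f : K → E) (hf : Continuous f) :
    ∃ k, ∃ g : K → X k, Continuous g ∧ f = (j k) ∘ g := by
  obtain ⟨N, hN⟩ : ∃ N, ∀ x, f x ∈ j N '' V N N := by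
    refine exists_forall_mem_of_forall_tendsto hKseq hf
      (fun _ _ hN => image_tower_mono hcompat hVmono hVstep hN hN) fun w a hw => ?_
    obtain ⟨k, v, b, hvw, -, hv⟩ := (hseq w a).mp hw
    exact exists_forall_mem_image_tower_of_tendsto hcompat hVopen hVmono hVcover hVstep hvw hv
  choose h hhV hjh using hN
  have hfac : f = j (N + 1) ∘ (i N ∘ h) := funext fun x => by simp [hcompat, hjh]
  refine ⟨N + 1, i N ∘ h, ?_, hfac⟩
  exact (hj (N + 1)).of_comp_of_injOn_of_isCompact (hVrel N N) (hjinj (N + 1)).injOn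
    (fun x => subset_closure ⟨h x, hhV x, rfl⟩) (hfac ▸ hf)

/-- Proposition 7.1, abstract form: let `K` be a sequentially compact,
first-countable topological space, let `E = colim X k` be a Silva space as in
Statements 15–16, and let `f : K → E` be continuous.  Then there are `k` and a
continuous map `g : K → X k` such that `f = j k ∘ g`. -/
theorem silva_map_from_compact_factors
    (K : Type*) [TopologicalSpace K] [FirstCountableTopology K]
    (hKseq : ∀ u : ℕ → K, ∃ a : K, ∃ φ : ℕ → ℕ,
      StrictMono φ ∧ Tendsto (u ∘ φ) atTop (nhds a))
    (X : ℕ → Type*) [∀ k, TopologicalSpace (X k)]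
    [∀ k, SecondCountableTopology (X k)] [∀ k, TopologicalSpace.MetrizableSpace (X k)]
    (E : Type*) [TopologicalSpace E] [T2Space E]
    (i : ∀ k, X k → X (k + 1)) (hi : ∀ k, Continuous (i k))
    (hiinj : ∀ k, Function.Injective (i k))
    (j : ∀ k, X k → E) (hj : ∀ k, Continuous (j k))
    (hjinj : ∀ k, Function.Injective (j k))
    (hcompat : ∀ k (x : X k), j (k + 1) (i k x) = j k x)
    (hunion : ∀ e : E, ∃ k, ∃ x : X k, j k x = e)
    (hseq : ∀ (u : ℕ → E) (a : E),
      Tendsto u atTop (nhds a) ↔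
        ∃ k, ∃ v : ℕ → X k, ∃ b : X k, (∀ n, j k (v n) = u n) ∧ j k b = a ∧
          Tendsto v atTop (nhds b))
    (V : ∀ k : ℕ, ℕ → Set (X k))
    (hVopen : ∀ k m, IsOpen (V k m))
    (hVmono : ∀ k m, V k m ⊆ V k (m + 1))
    (hVcover : ∀ k, (⋃ m, V k m) = Set.univ)
    (hVrel : ∀ k m, IsCompact (closure (i k '' V k m)))
    (hVstep : ∀ k m, i k '' V k m ⊆ V (k + 1) m)
    (f : K → E) (hf : Continuous f) :
    ∃ k, ∃ g : K → X k, Continuous g ∧ f = (j k) ∘ g :=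
  silva_map_from_compact_factors_general K hKseq X E i j hj hjinj hcompat hseq V hVopen hVmono
    hVcover hVrel hVstep f hf
end
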